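/- For any graph G with no isolated vertex, of order n and maximum degree Δ: ⌈2n/Δ⌉ ≤ γ_{(2,2,2)}(G) ≤ 2γ_t(G). Moreover, if G has minimum degree δ ≥ 2, then γ_{(2,2,2)}(G) ≤ γ_{×2,t}(G). -/

import Mathlib

open scoped Classical
open Finset SimpleGraph

/-- A `w`-dominating function: `f : V → {0,…,l}` with `f(N(v)) ≥ w_{f(v)}` for all `v`. -/
def WDom {V : Type*} [Fintype V] (G : SimpleGraph V) {l : ℕ} (w : Fin (l+1) → ℕ)
    (f : V → Fin (l+1)) : Prop :=
  ∀ v, w (f v) ≤ ∑ u, if G.Adj v u then (f u : ℕ) else 0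

/-- The `w`-domination number. -/
noncomputable def gammaW {V : Type*} [Fintype V] (G : SimpleGraph V) {l : ℕ}
    (w : Fin (l+1) → ℕ) : ℕ :=
  sInf {n | ∃ f : V → Fin (l+1), WDom G w f ∧ ∑ v, (f v : ℕ) = n}

/-- The Italian domination number `γ_I = γ_{(2,0,0)}`. -/
noncomputable def gammaI {V : Type*} [Fintype V] (G : SimpleGraph V) : ℕ :=
  gammaW G ![2,0,0]

/-- The domination number. -/
noncomputable def gamma {V : Type*} [Fintype V] (G : SimpleGraph V) : ℕ :=
  sInf {n | ∃ S : Finset V, (∀ v, v ∈ S ∨ ∃ u ∈ S, G.Adj u v) ∧ S.card = n}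

/-- The total domination number. -/
noncomputable def gammaT {V : Type*} [Fintype V] (G : SimpleGraph V) : ℕ :=
  sInf {n | ∃ S : Finset V, (∀ v, ∃ u ∈ S, G.Adj u v) ∧ S.card = n}

/-- The 2-domination number. -/
noncomputable def gamma2 {V : Type*} [Fintype V] (G : SimpleGraph V) : ℕ :=
  sInf {n | ∃ S : Finset V, (∀ v ∉ S, 2 ≤ (S.filter (fun u => G.Adj u v)).card) ∧ S.card = n}

/-- The double domination number. -/
noncomputable def gammaX2 {V : Type*} [Fintype V] (G : SimpleGraph V) : ℕ :=
  sInf {n | ∃ S : Finset V, (∀ v, 2 ≤ (S.filter (fun u => u = v ∨ G.Adj u v)).card) ∧ S.card = n}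

/-- The double total domination number. -/
noncomputable def gammaX2T {V : Type*} [Fintype V] (G : SimpleGraph V) : ℕ :=
  sInf {n | ∃ S : Finset V, (∀ v, 2 ≤ (S.filter (fun u => G.Adj u v)).card) ∧ S.card = n}

/-- The lexicographic product `G ∘ H`. -/
def lexProd {V W : Type*} (G : SimpleGraph V) (H : SimpleGraph W) : SimpleGraph (V × W) where
  Adj x y := G.Adj x.1 y.1 ∨ (x.1 = y.1 ∧ H.Adj x.2 y.2)
  symm := by
    constructor
    rintro x y (h | ⟨h1, h2⟩)
    · exact Or.inl h.symm
    · exact Or.inr ⟨h1.symm, h2.symm⟩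
  loopless := by
    constructor
    rintro x (h | ⟨_, h⟩)
    · exact G.loopless.1 _ h
    · exact H.loopless.1 _ h

/-!
Lower bound: summing `f(N(v)) ≥ 2` over all vertices counts every value `f(u)` exactly `deg u ≤ Δ`
times, so `2n ≤ Δ · γ_{(2,2,2)}(G)`. Upper bounds: twice the indicator of a total dominating set, and
the indicator of a double total dominating set, are `(2,2,2)`-dominating functions.
-/

section

variable {V : Type*} [Fintype V] (G : SimpleGraph V)

lemma sum_sum_ite_adj_eq_sum_degree_mul (g : V → ℕ) :
    ∑ v, ∑ u, (if G.Adj v u then g u else 0) = ∑ u, G.degree u * g u := by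
  rw [Finset.sum_comm]
  refine Finset.sum_congr rfl fun u _ => ?_
  rw [← Finset.sum_filter, Finset.sum_const, smul_eq_mul, ← card_neighborFinset_eq_degree,
    neighborFinset_eq_filter]
  simp only [G.adj_comm]

lemma sum_sum_ite_adj_le_maxDegree_mul (g : V → ℕ) :
    ∑ v, ∑ u, (if G.Adj v u then g u else 0) ≤ G.maxDegree * ∑ u, g u := by
  rw [sum_sum_ite_adj_eq_sum_degree_mul, Finset.mul_sum]
  exact Finset.sum_le_sum fun u _ => Nat.mul_le_mul_right _ (G.degree_le_maxDegree u)

lemma sum_ite_adj_indicator {l : ℕ} (c : Fin (l + 1)) (S : Finset V) (v : V) :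
    ∑ u, (if G.Adj v u then ((if u ∈ S then c else 0 : Fin (l + 1)) : ℕ) else 0) =
      c * #{u ∈ S | G.Adj u v} := by
  calc _ = ∑ u, if u ∈ S then (if G.Adj u v then (c : ℕ) else 0) else 0 :=
        Finset.sum_congr rfl fun u _ => by split_ifs <;> simp_all [G.adj_comm]
    _ = c * #{u ∈ S | G.Adj u v} := by
      rw [Finset.sum_ite_mem, Finset.univ_inter, ← Finset.sum_filter, Finset.sum_const,
        smul_eq_mul, mul_comm]

lemma sum_val_indicator {l : ℕ} (c : Fin (l + 1)) (S : Finset V) :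
    ∑ v, ((if v ∈ S then c else 0 : Fin (l + 1)) : ℕ) = c * #S := by
  simp only [apply_ite Fin.val, Fin.val_zero, Finset.sum_ite_mem, Finset.univ_inter,
    Finset.sum_const, smul_eq_mul, mul_comm]

lemma wDom_indicator {l : ℕ} {w : Fin (l + 1) → ℕ} (c : Fin (l + 1)) {S : Finset V}
    (h : ∀ v i, w i ≤ c * #{u ∈ S | G.Adj u v}) :
    WDom G w (fun v => if v ∈ S then c else 0) := fun v => by
  rw [sum_ite_adj_indicator]
  exact h v _

lemma gammaW_le_sum {l : ℕ} {w : Fin (l + 1) → ℕ} {f : V → Fin (l + 1)} (hf : WDom G w f) :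
    gammaW G w ≤ ∑ v, (f v : ℕ) :=
  Nat.sInf_le ⟨f, hf, rfl⟩

lemma gammaW_le_mul_card {l : ℕ} {w : Fin (l + 1) → ℕ} (c : Fin (l + 1)) {S : Finset V}
    (h : ∀ v i, w i ≤ c * #{u ∈ S | G.Adj u v}) :
    gammaW G w ≤ c * #S :=
  sum_val_indicator c S ▸ gammaW_le_sum G (wDom_indicator G c h)

lemma exists_sum_eq_gammaW {l : ℕ} {w : Fin (l + 1) → ℕ} {f : V → Fin (l + 1)} (hf : WDom G w f) :
    ∃ g : V → Fin (l + 1), WDom G w g ∧ ∑ v, (g v : ℕ) = gammaW G w :=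
  Nat.sInf_mem (s := {n | ∃ g : V → Fin (l + 1), WDom G w g ∧ ∑ v, (g v : ℕ) = n})
    ⟨_, f, hf, rfl⟩

lemma mul_card_le_maxDegree_mul_gammaW {l : ℕ} {w : Fin (l + 1) → ℕ} {c : ℕ} (hw : ∀ i, c ≤ w i)
    {f : V → Fin (l + 1)} (hf : WDom G w f) :
    c * Fintype.card V ≤ G.maxDegree * gammaW G w := by
  obtain ⟨g, hg, hg_sum⟩ := exists_sum_eq_gammaW G hf
  calc c * Fintype.card V = ∑ _v : V, c := by simp [mul_comm]
    _ ≤ ∑ v, ∑ u, (if G.Adj v u then (g u : ℕ) else 0) :=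
      Finset.sum_le_sum fun v _ => (hw _).trans (hg v)
    _ ≤ G.maxDegree * gammaW G w := hg_sum ▸ sum_sum_ite_adj_le_maxDegree_mul G _

lemma exists_card_eq_gammaT (hG : ∀ v, ∃ u, G.Adj v u) :
    ∃ S : Finset V, (∀ v, ∃ u ∈ S, G.Adj u v) ∧ #S = gammaT G :=
  Nat.sInf_mem (s := {n | ∃ S : Finset V, (∀ v, ∃ u ∈ S, G.Adj u v) ∧ #S = n})
    ⟨_, univ, fun v => (hG v).imp fun u hu => ⟨mem_univ u, hu.symm⟩, rfl⟩

lemma exists_card_eq_gammaX2T (hδ : 2 ≤ G.minDegree) :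
    ∃ S : Finset V, (∀ v, 2 ≤ #{u ∈ S | G.Adj u v}) ∧ #S = gammaX2T G := by
  refine Nat.sInf_mem (s := {n | ∃ S : Finset V, (∀ v, 2 ≤ #{u ∈ S | G.Adj u v}) ∧ #S = n})
    ⟨_, univ, fun v => ?_, rfl⟩
  simpa [← card_neighborFinset_eq_degree, neighborFinset_eq_filter, G.adj_comm] using
    hδ.trans (G.minDegree_le_degree v)

end

-- For `b = 0` this is the junk value `(a : ℚ) / 0 = 0`.
lemma Int.ceil_div_le_of_le_mul {a b k : ℕ} (h : a ≤ b * k) : ⌈(a : ℚ) / b⌉ ≤ k := by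
  rcases Nat.eq_zero_or_pos b with rfl | hb
  · simp
  · rw [Int.ceil_le, div_le_iff₀ (by exact_mod_cast hb)]
    exact_mod_cast (mul_comm b k) ▸ h

theorem gammaW222_bounds {V : Type*} [Fintype V] (G : SimpleGraph V)
    (hG : ∀ v, ∃ u, G.Adj v u) :
    (⌈(2 * (Fintype.card V : ℚ)) / (G.maxDegree : ℚ)⌉ ≤ (gammaW G ![2,2,2] : ℤ) ∧
      gammaW G ![2,2,2] ≤ 2 * gammaT G) ∧
    (2 ≤ G.minDegree → gammaW G ![2,2,2] ≤ gammaX2T G) := by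
  have hw : ∀ i : Fin 3, (![2,2,2] : Fin 3 → ℕ) i = 2 := by decide
  obtain ⟨S, hS, hS_card⟩ := exists_card_eq_gammaT G hG
  have hS_cover : ∀ v i, ![2,2,2] i ≤ (2 : Fin 3) * #{u ∈ S | G.Adj u v} := fun v i => by
    obtain ⟨u, hu⟩ := hS v
    have : 0 < #{u ∈ S | G.Adj u v} := card_pos.2 ⟨u, mem_filter.2 hu⟩
    rw [hw, Fin.val_two]
    omega
  refine ⟨⟨?_, hS_card ▸ gammaW_le_mul_card G 2 hS_cover⟩, fun hδ => ?_⟩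
  · exact_mod_cast Int.ceil_div_le_of_le_mul
      (mul_card_le_maxDegree_mul_gammaW G (fun i => (hw i).ge) (wDom_indicator G 2 hS_cover))
  · obtain ⟨T, hT, hT_card⟩ := exists_card_eq_gammaX2T G hδ
    have := gammaW_le_mul_card G (w := ![2,2,2]) (1 : Fin 3) fun v i => by simpa [hw] using hT v
    rwa [Fin.val_one, one_mul, hT_card] at this
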